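/- Let G = (X,Y) be a connected bipartite graph in G^cs with |V(G)| ≥ 5. Then no two vertices of degree two in G have the same neighborhood. -/

import Mathlib

/-!
Let `a`, `b` be twins of degree two with common neighbourhood `{x, y}`; `x` and `y` are not
adjacent since `G` is bipartite. As `G` is connected with at least five vertices, one of them,
say `x`, has a neighbour `z ∉ {a, b}`. Give `a`, `b`, `x` weight 3, `y` weight 4, `z` weight 2
and all other vertices a tiny weight of total less than 1. Then `{x, y}` is a safe set of
weight 7: the components of its complement are `{a}`, `{b}` and sets of weight less than 3.
But every connected safe set `T` weighs more than 7: either `T` itself contains heavy vertices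
of total weight more than 7, or its complement contains one of the paths `b y`, `b x z`,
`x b y`, `a x b`, `a y b`, whose weight `T` has to dominate. Hence `s(G, w) < cs(G, w)`.
-/

open SimpleGraph
open scoped Classical

variable {V : Type*} [Fintype V]

noncomputable def setWeight (w : V → ℝ) (A : Set V) : ℝ :=
  ∑ v : V, if v ∈ A then w v else 0

def IsComponentOf (G : SimpleGraph V) (S C : Set V) : Prop :=
  ∃ c : (G.induce S).ConnectedComponent,
    C = Subtype.val '' {x : ↥S | (G.induce S).connectedComponentMk x = c}

def Touches (G : SimpleGraph V) (C D : Set V) : Prop :=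
  ∃ a ∈ C, ∃ b ∈ D, G.Adj a b

def IsSafeSet (G : SimpleGraph V) (w : V → ℝ) (S : Set V) : Prop :=
  S.Nonempty ∧ S ≠ Set.univ ∧
    ∀ C D : Set V, IsComponentOf G S C → IsComponentOf G Sᶜ D → Touches G C D →
      setWeight w D ≤ setWeight w C

def IsConnSafeSet (G : SimpleGraph V) (w : V → ℝ) (S : Set V) : Prop :=
  IsSafeSet G w S ∧ (G.induce S).Connected

noncomputable def safeNumber (G : SimpleGraph V) (w : V → ℝ) : ℝ :=
  sInf (setWeight w '' {S | IsSafeSet G w S})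

noncomputable def connSafeNumber (G : SimpleGraph V) (w : V → ℝ) : ℝ :=
  sInf (setWeight w '' {S | IsConnSafeSet G w S})

def InGcs (G : SimpleGraph V) : Prop :=
  ∀ w : V → ℝ, (∀ v, 0 < w v) → safeNumber G w = connSafeNumber G w

section setWeight

variable (w : V → ℝ)

lemma setWeight_singleton (v : V) : setWeight w {v} = w v := by
  simp [setWeight]

lemma setWeight_insert {p : V} {A : Set V} (hp : p ∉ A) :
    setWeight w (insert p A) = w p + setWeight w A := by
  rw [setWeight, setWeight, ← Fintype.sum_ite_eq' p w, ← Finset.sum_add_distrib]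
  refine Finset.sum_congr rfl fun v _ => ?_
  by_cases hvp : v = p
  · subst hvp; simp [hp]
  · simp [hvp]

lemma setWeight_pair {p q : V} (hpq : p ≠ q) : setWeight w {p, q} = w p + w q := by
  rw [setWeight_insert w (by simpa), setWeight_singleton]

lemma setWeight_triple {p q r : V} (hpq : p ≠ q) (hpr : p ≠ r) (hqr : q ≠ r) :
    setWeight w {p, q, r} = w p + w q + w r := by
  rw [setWeight_insert w (by simp [hpq, hpr]), setWeight_pair w hqr, add_assoc]

variable {w}

lemma setWeight_mono (hw : ∀ v, 0 ≤ w v) {A B : Set V} (h : A ⊆ B) :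
    setWeight w A ≤ setWeight w B :=
  Finset.sum_le_sum fun v _ => by
    by_cases hA : v ∈ A
    · simp [hA, h hA]
    · by_cases hB : v ∈ B <;> simp [hA, hB, hw v]

lemma le_setWeight (hw : ∀ v, 0 ≤ w v) {A : Set V} {p : V} (hp : p ∈ A) :
    w p ≤ setWeight w A := by
  simpa [setWeight_singleton] using setWeight_mono hw (Set.singleton_subset_iff.2 hp)

lemma add_add_le_setWeight (hw : ∀ v, 0 ≤ w v) {A : Set V} {p q r : V} (hp : p ∈ A)
    (hq : q ∈ A) (hr : r ∈ A) (hpq : p ≠ q) (hpr : p ≠ r) (hqr : q ≠ r) :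
    w p + w q + w r ≤ setWeight w A := by
  rw [← setWeight_triple w hpq hpr hqr]
  exact setWeight_mono hw (by rintro v (rfl | rfl | rfl) <;> assumption)

lemma setWeight_pos (hw : ∀ v, 0 < w v) {A : Set V} (hA : A.Nonempty) : 0 < setWeight w A :=
  (hw _).trans_le (le_setWeight (fun v => (hw v).le) hA.some_mem)

lemma setWeight_le_of_inter_subset (hw : ∀ v, 0 ≤ w v) {A B K : Set V} (h : A ∩ K ⊆ B) :
    setWeight w A ≤ setWeight w B + setWeight w Kᶜ := by
  calc setWeight w A ≤ setWeight w (A ∩ K) + setWeight w Kᶜ := by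
        rw [setWeight, setWeight, setWeight, ← Finset.sum_add_distrib]
        refine Finset.sum_le_sum fun v _ => ?_
        by_cases hA : v ∈ A <;> by_cases hK : v ∈ K <;> simp [hA, hK, hw v]
    _ ≤ setWeight w B + setWeight w Kᶜ := by gcongr; exact setWeight_mono hw h

lemma setWeight_le_card_mul {A : Set V} {c : ℝ} (hc : 0 ≤ c) (h : ∀ v ∈ A, w v ≤ c) :
    setWeight w A ≤ Fintype.card V * c := by
  calc setWeight w A ≤ ∑ _v : V, c := Finset.sum_le_sum fun v _ => by
        by_cases hv : v ∈ A <;> simp [hv, h v, hc]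
    _ = Fintype.card V * c := by simp

end setWeight

namespace SimpleGraph

variable {W : Type*} {G : SimpleGraph W}

lemma Reachable.mem_of_adj_closed {A : Set W} (hA : ∀ p ∈ A, ∀ q, G.Adj p q → q ∈ A)
    {u v : W} (huv : G.Reachable u v) (hu : u ∈ A) : v ∈ A := by
  obtain ⟨p⟩ := huv
  induction p with
  | nil => exact hu
  | cons hadj _ ih => exact ih (hA _ hu _ hadj)

lemma Preconnected.card_le_of_adj_closed [Fintype W] (hG : G.Preconnected) {s : Finset W}
    {v : W} (hv : v ∈ s) (hs : ∀ p ∈ s, ∀ q, G.Adj p q → q ∈ s) : Fintype.card W ≤ s.card :=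
  Finset.card_le_card fun u _ => (hG v u).mem_of_adj_closed hs hv

lemma exists_adj_mem_of_connected_induce {T : Set W} (hT : (G.induce T).Connected) {u v : W}
    (hv : v ∈ T) (hu : u ∈ T) (huv : u ≠ v) : ∃ t ∈ T, G.Adj v t := by
  obtain ⟨p⟩ := hT.preconnected ⟨v, hv⟩ ⟨u, hu⟩
  exact ⟨_, p.snd.2, p.adj_snd (p.not_nil_of_ne fun h => huv (congrArg Subtype.val h).symm)⟩

lemma induce_triple_connected_of_adj {p q r : W} (hpq : G.Adj p q) (hqr : G.Adj q r) :
    (G.induce {p, q, r}).Connected := by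
  rw [← Set.singleton_union]
  exact connected_induce_union Preconnected.of_subsingleton
    (induce_pair_connected_of_adj hqr).preconnected rfl (Set.mem_insert q {r}) hpq

lemma ComponentCompl.subset_singleton {K : Set W} {C : G.ComponentCompl K} {v : W} (hv : v ∈ C)
    (hN : G.neighborSet v ⊆ K) : (C : Set W) ⊆ {v} := by
  obtain ⟨hvK, hvC⟩ := hv
  rintro u ⟨huK, huC⟩
  have hreach := ConnectedComponent.exact (hvC.trans huC.symm)
  have hmem := hreach.mem_of_adj_closed (A := {⟨v, hvK⟩}) (fun p hp q hpq => by
    subst hp; exact absurd (hN hpq) q.2) rfl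
  exact congrArg Subtype.val hmem

lemma ComponentCompl.exists_subset_of_connected {K P : Set W} (hP : (G.induce P).Connected)
    (hPK : P ⊆ Kᶜ) : ∃ C : G.ComponentCompl K, P ⊆ C := by
  obtain ⟨⟨p, hp⟩⟩ := hP.nonempty
  refine ⟨G.componentComplMk (hPK hp), fun q hq => ⟨hPK hq, ?_⟩⟩
  exact ConnectedComponent.sound ((hP.preconnected ⟨q, hq⟩ ⟨p, hp⟩).map
    (induceHomOfLE G hPK).toHom)

lemma exists_neighborSet_eq_pair [Fintype W] [DecidableRel G.Adj] {a : W}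
    (ha : G.degree a = 2) :
    ∃ x y, x ≠ y ∧ G.neighborSet a = {x, y} := by
  obtain ⟨x, y, hxy, hN⟩ := Finset.card_eq_two.1 ha
  exact ⟨x, y, hxy, by rw [← coe_neighborFinset, hN, Finset.coe_pair]⟩

lemma adj_left_of_neighborSet_eq_pair {a x y : W} (h : G.neighborSet a = {x, y}) :
    G.Adj a x := by
  rw [← mem_neighborSet, h]
  exact Set.mem_insert x {y}

lemma adj_right_of_neighborSet_eq_pair {a x y : W} (h : G.neighborSet a = {x, y}) :
    G.Adj a y :=
  adj_left_of_neighborSet_eq_pair (Set.pair_comm x y ▸ h)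

lemma Colorable.not_adj_of_adj_of_adj (hG : G.Colorable 2) {a x y : W} (hx : G.Adj a x)
    (hy : G.Adj a y) : ¬ G.Adj x y :=
  fun hxy => hG.cliqueFree (by norm_num) {a, x, y} (is3Clique_triple_iff.2 ⟨hx, hy, hxy⟩)

end SimpleGraph

section Components

variable {W : Type*} {G : SimpleGraph W}

lemma isComponentOf_compl_iff {K D : Set W} :
    IsComponentOf G Kᶜ D ↔ ∃ C : G.ComponentCompl K, (C : Set W) = D := by
  refine exists_congr fun C => ?_
  have hC : Subtype.val '' {x | (G.induce Kᶜ).connectedComponentMk x = C} = (C : Set W) :=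
    Set.ext fun v => ⟨by rintro ⟨⟨v, hvK⟩, hv, rfl⟩; exact ⟨hvK, hv⟩,
      fun ⟨hvK, hv⟩ => ⟨⟨v, hvK⟩, hv, rfl⟩⟩
  rw [hC, eq_comm]

lemma IsComponentOf.subset {S C : Set W} (h : IsComponentOf G S C) : C ⊆ S := by
  obtain ⟨c, rfl⟩ := h
  rintro _ ⟨x, _, rfl⟩
  exact x.2

lemma IsComponentOf.nonempty {S C : Set W} (h : IsComponentOf G S C) : C.Nonempty := by
  obtain ⟨c, rfl⟩ := h
  obtain ⟨x, hx⟩ := c.exists_rep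
  exact ⟨x.1, x, hx, rfl⟩

lemma isComponentOf_self {T : Set W} (hT : (G.induce T).Connected) : IsComponentOf G T T := by
  obtain ⟨u⟩ := hT.nonempty
  refine ⟨(G.induce T).connectedComponentMk u, Set.ext fun v => ⟨fun hv => ?_, ?_⟩⟩
  · exact ⟨⟨v, hv⟩, ConnectedComponent.sound (hT.preconnected _ _), rfl⟩
  · rintro ⟨x, _, rfl⟩
    exact x.2

end Components

section SafeSets

variable {G : SimpleGraph V} {w : V → ℝ}

lemma IsConnSafeSet.setWeight_le_of_connected (hG : G.Preconnected) (hw : ∀ v, 0 ≤ w v)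
    {T P : Set V} (hT : IsConnSafeSet G w T) (hP : (G.induce P).Connected) (hPT : P ⊆ Tᶜ) :
    setWeight w P ≤ setWeight w T := by
  obtain ⟨C, hPC⟩ := ComponentCompl.exists_subset_of_connected hP hPT
  obtain ⟨⟨c, t⟩, hc, ht, hct⟩ := ComponentCompl.exists_adj_boundary_pair hG hT.1.1 C
  calc setWeight w P ≤ setWeight w C := setWeight_mono hw hPC
    _ ≤ setWeight w T := hT.1.2.2 T C (isComponentOf_self hT.2)
        (isComponentOf_compl_iff.2 ⟨C, rfl⟩) ⟨t, ht, c, hc, hct.symm⟩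

lemma IsConnSafeSet.add_le_of_adj (hG : G.Preconnected) (hw : ∀ v, 0 ≤ w v) {T : Set V}
    (hT : IsConnSafeSet G w T) {p q : V} (hp : p ∉ T) (hq : q ∉ T) (hpq : G.Adj p q) :
    w p + w q ≤ setWeight w T := by
  rw [← setWeight_pair w hpq.ne]
  exact hT.setWeight_le_of_connected hG hw (induce_pair_connected_of_adj hpq)
    (by rintro v (rfl | rfl) <;> assumption)

lemma IsConnSafeSet.add_add_le_of_adj (hG : G.Preconnected) (hw : ∀ v, 0 ≤ w v) {T : Set V}
    (hT : IsConnSafeSet G w T) {p q r : V} (hp : p ∉ T) (hq : q ∉ T) (hr : r ∉ T)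
    (hpq : G.Adj p q) (hqr : G.Adj q r) (hpr : p ≠ r) :
    w p + w q + w r ≤ setWeight w T := by
  rw [← setWeight_triple w hpq.ne hpr hqr.ne]
  exact hT.setWeight_le_of_connected hG hw (induce_triple_connected_of_adj hpq hqr)
    (by rintro v (rfl | rfl | rfl) <;> assumption)

lemma safeNumber_ne_connSafeNumber (hw : ∀ v, 0 < w v) {S : Set V} (hS : IsSafeSet G w S)
    (hlt : ∀ T, IsConnSafeSet G w T → setWeight w S < setWeight w T) :
    safeNumber G w ≠ connSafeNumber G w := by
  have hfin : ∀ P : Set V → Prop, (setWeight w '' {S | P S}).Finite := fun _ => Set.toFinite _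
  rcases Set.eq_empty_or_nonempty {T | IsConnSafeSet G w T} with hnone | hsome
  · have hne : (setWeight w '' {S | IsSafeSet G w S}).Nonempty := ⟨_, S, hS, rfl⟩
    obtain ⟨S', hS', hS'eq⟩ := hne.csInf_mem (hfin _)
    rw [safeNumber, ← hS'eq, connSafeNumber, hnone, Set.image_empty, Real.sInf_empty]
    exact (setWeight_pos hw hS'.1).ne'
  · obtain ⟨T, hT, hTeq⟩ := (hsome.image (setWeight w)).csInf_mem (hfin _)
    rw [connSafeNumber, ← hTeq]
    exact ((csInf_le (hfin (IsSafeSet G w)).bddBelow ⟨S, hS, rfl⟩).trans_lt (hlt T hT)).ne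

end SafeSets

structure TwinConfig {W : Type*} (G : SimpleGraph W) (a b x y z : W) : Prop where
  ne_ab : a ≠ b
  ne_xy : x ≠ y
  neighborSet_a : G.neighborSet a = {x, y}
  neighborSet_b : G.neighborSet b = {x, y}
  not_adj_xy : ¬ G.Adj x y
  adj_xz : G.Adj x z
  ne_za : z ≠ a
  ne_zb : z ≠ b

structure IsTwinWeight (w : V → ℝ) (a b x y z : V) : Prop where
  pos : ∀ v, 0 < w v
  apply_a : w a = 3
  apply_b : w b = 3
  apply_x : w x = 3
  apply_y : w y = 4
  apply_z : w z = 2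
  rest_lt_one : setWeight w ({a, b, x, y, z} : Set V)ᶜ < 1

namespace IsTwinWeight

variable {w : V → ℝ} {a b x y z : V}

lemma nonneg (hw : IsTwinWeight w a b x y z) (v : V) : 0 ≤ w v :=
  (hw.pos v).le

lemma swap (hw : IsTwinWeight w a b x y z) : IsTwinWeight w b a x y z :=
  ⟨hw.pos, hw.apply_b, hw.apply_a, hw.apply_x, hw.apply_y, hw.apply_z,
    Set.insert_comm a b _ ▸ hw.rest_lt_one⟩

end IsTwinWeight

namespace TwinConfig

section Graph

variable {W : Type*} {G : SimpleGraph W} {a b x y z : W}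

lemma swap (h : TwinConfig G a b x y z) : TwinConfig G b a x y z :=
  ⟨h.ne_ab.symm, h.ne_xy, h.neighborSet_b, h.neighborSet_a, h.not_adj_xy, h.adj_xz, h.ne_zb,
    h.ne_za⟩

lemma eq_or_eq_of_adj_a (h : TwinConfig G a b x y z) {q : W} (hq : G.Adj a q) :
    q = x ∨ q = y := by
  rwa [← mem_neighborSet, h.neighborSet_a] at hq

lemma adj_ax (h : TwinConfig G a b x y z) : G.Adj a x :=
  adj_left_of_neighborSet_eq_pair h.neighborSet_a

lemma adj_ay (h : TwinConfig G a b x y z) : G.Adj a y :=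
  adj_right_of_neighborSet_eq_pair h.neighborSet_a

lemma ne_ax (h : TwinConfig G a b x y z) : a ≠ x := h.adj_ax.ne

lemma ne_ay (h : TwinConfig G a b x y z) : a ≠ y := h.adj_ay.ne

lemma ne_zx (h : TwinConfig G a b x y z) : z ≠ x := h.adj_xz.ne'

lemma ne_zy (h : TwinConfig G a b x y z) : z ≠ y := fun hzy => h.not_adj_xy (hzy ▸ h.adj_xz)

end Graph

variable {G : SimpleGraph V} {a b x y z : V} {w : V → ℝ}

lemma exists_isTwinWeight (h : TwinConfig G a b x y z) : ∃ w, IsTwinWeight w a b x y z := by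
  set ε : ℝ := 1 / (Fintype.card V + 1)
  have hε : 0 < ε := by positivity
  have hcard : Fintype.card V * ε < 1 := by
    rw [mul_one_div, div_lt_one (by positivity)]
    exact lt_add_one _
  let w : V → ℝ := fun v =>
    if v = y then 4 else if v = z then 2 else if v = a ∨ v = b ∨ v = x then 3 else ε
  have hrest : ∀ v ∈ ({a, b, x, y, z} : Set V)ᶜ, w v ≤ ε := fun v hv => by
    simp only [Set.mem_compl_iff, Set.mem_insert_iff, Set.mem_singleton_iff, not_or] at hv
    simp [w, hv]
  refine ⟨w, fun v => ?_, ?_, ?_, ?_, ?_, ?_, ?_⟩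
  · simp only [w]
    split_ifs <;> positivity
  · simp [w, h.ne_ay, h.ne_za.symm]
  · simp [w, h.swap.ne_ay, h.ne_zb.symm]
  · simp [w, h.ne_xy, h.ne_zx.symm]
  · simp [w]
  · simp [w, h.ne_zy]
  · exact (setWeight_le_card_mul hε.le hrest).trans_lt hcard

lemma isSafeSet (h : TwinConfig G a b x y z) (hw : IsTwinWeight w a b x y z) :
    IsSafeSet G w {x, y} := by
  have hw0 := hw.nonneg
  refine ⟨⟨x, Set.mem_insert x {y}⟩, fun huniv => ?_, fun C D hC hD _ => ?_⟩
  · have ha : a ∈ ({x, y} : Set V) := huniv ▸ Set.mem_univ a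
    rcases ha with rfl | rfl
    exacts [h.ne_ax rfl, h.ne_ay rfl]
  have hC : 3 ≤ setWeight w C := by
    obtain ⟨c, hc⟩ := hC.nonempty
    rcases hC.subset hc with rfl | rfl
    · exact hw.apply_x ▸ le_setWeight hw0 hc
    · linarith [hw.apply_y, le_setWeight hw0 hc]
  obtain ⟨D, rfl⟩ := isComponentOf_compl_iff.1 hD
  refine le_trans ?_ hC
  by_cases ha : a ∈ D
  · exact hw.apply_a ▸ (setWeight_mono hw0 (D.subset_singleton ha h.neighborSet_a.le)).trans
      (setWeight_singleton w a).le
  by_cases hb : b ∈ D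
  · exact hw.apply_b ▸ (setWeight_mono hw0 (D.subset_singleton hb h.neighborSet_b.le)).trans
      (setWeight_singleton w b).le
  have hDz : (D : Set V) ∩ {a, b, x, y, z} ⊆ {z} := by
    rintro v ⟨hvD, hvK⟩
    have hvxy : v ∉ ({x, y} : Set V) := ComponentCompl.notMem_of_mem (SetLike.mem_coe.1 hvD)
    simp only [Set.mem_insert_iff, Set.mem_singleton_iff, not_or] at hvK hvxy ⊢
    rcases hvK with rfl | rfl | rfl | rfl | hvz
    exacts [absurd hvD ha, absurd hvD hb, absurd rfl hvxy.1, absurd rfl hvxy.2, hvz]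
  have hDup := setWeight_le_of_inter_subset hw0 hDz
  rw [setWeight_singleton, hw.apply_z] at hDup
  linarith [hw.rest_lt_one]

lemma lt_setWeight_of_mem_of_mem (h : TwinConfig G a b x y z) (hw : IsTwinWeight w a b x y z)
    {T : Set V} (hT : IsConnSafeSet G w T) (ha : a ∈ T) (hb : b ∈ T) : 7 < setWeight w T := by
  have hw0 := hw.nonneg
  obtain ⟨-, hwa, hwb, hwx, hwy, -, -⟩ := hw
  obtain ⟨u, huT, hau⟩ := exists_adj_mem_of_connected_induce hT.2 ha hb h.ne_ab.symm
  rcases h.eq_or_eq_of_adj_a hau with rfl | rfl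
  · linarith [add_add_le_setWeight hw0 ha hb huT h.ne_ab h.ne_ax h.swap.ne_ax]
  · linarith [add_add_le_setWeight hw0 ha hb huT h.ne_ab h.ne_ay h.swap.ne_ay]

lemma lt_setWeight_of_mem_of_notMem (hG : G.Preconnected) (h : TwinConfig G a b x y z)
    (hw : IsTwinWeight w a b x y z) {T : Set V} (hT : IsConnSafeSet G w T) (ha : a ∈ T)
    (hb : b ∉ T) : 7 < setWeight w T := by
  have hw0 := hw.nonneg
  obtain ⟨-, hwa, hwb, hwx, hwy, hwz, hrest⟩ := hw
  by_cases hx : x ∈ T <;> by_cases hy : y ∈ T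
  · linarith [add_add_le_setWeight hw0 ha hx hy h.ne_ax h.ne_ay h.ne_xy]
  · by_cases hz : z ∈ T
    · linarith [add_add_le_setWeight hw0 ha hx hz h.ne_ax h.ne_za.symm h.ne_zx.symm]
    -- `T` weighs little more than `{a, x}`, less than the edge `b y` outside it
    have hTK : T ∩ {a, b, x, y, z} ⊆ {a, x} := by
      rintro v ⟨hvT, hvK⟩
      simp only [Set.mem_insert_iff, Set.mem_singleton_iff] at hvK ⊢
      rcases hvK with rfl | rfl | rfl | rfl | rfl
      exacts [Or.inl rfl, absurd hvT hb, Or.inr rfl, absurd hvT hy, absurd hvT hz]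
    have hup := setWeight_le_of_inter_subset hw0 hTK
    rw [setWeight_pair w h.ne_ax] at hup
    linarith [hT.add_le_of_adj hG hw0 hb hy h.swap.adj_ay]
  · by_cases hz : z ∈ T
    · linarith [add_add_le_setWeight hw0 ha hy hz h.ne_ay h.ne_za.symm h.ne_zy.symm]
    · linarith [hT.add_add_le_of_adj hG hw0 hb hx hz h.swap.adj_ax h.adj_xz h.ne_zb.symm]
  · linarith [hT.add_add_le_of_adj hG hw0 hx hb hy h.swap.adj_ax.symm h.swap.adj_ay h.ne_xy]

lemma lt_setWeight_of_notMem_of_notMem (hG : G.Preconnected) (h : TwinConfig G a b x y z)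
    (hw : IsTwinWeight w a b x y z) {T : Set V} (hT : IsConnSafeSet G w T) (ha : a ∉ T)
    (hb : b ∉ T) : 7 < setWeight w T := by
  have hw0 := hw.nonneg
  obtain ⟨hpos, hwa, hwb, hwx, hwy, -, -⟩ := hw
  by_cases hx : x ∈ T
  · by_cases hy : y ∈ T
    · obtain ⟨u, huT, hxu⟩ := exists_adj_mem_of_connected_induce hT.2 hx hy h.ne_xy.symm
      have hyu : y ≠ u := fun hyu => h.not_adj_xy (hyu ▸ hxu)
      linarith [add_add_le_setWeight hw0 hx hy huT h.ne_xy hxu.ne hyu, hpos u]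
    · linarith [hT.add_add_le_of_adj hG hw0 ha hy hb h.adj_ay h.swap.adj_ay.symm h.ne_ab]
  · linarith [hT.add_add_le_of_adj hG hw0 ha hx hb h.adj_ax h.swap.adj_ax.symm h.ne_ab]

lemma setWeight_lt (hG : G.Preconnected) (h : TwinConfig G a b x y z)
    (hw : IsTwinWeight w a b x y z) {T : Set V} (hT : IsConnSafeSet G w T) :
    setWeight w {x, y} < setWeight w T := by
  rw [setWeight_pair w h.ne_xy, hw.apply_x, hw.apply_y, show (3 : ℝ) + 4 = 7 by norm_num]
  by_cases ha : a ∈ T <;> by_cases hb : b ∈ T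
  · exact h.lt_setWeight_of_mem_of_mem hw hT ha hb
  · exact h.lt_setWeight_of_mem_of_notMem hG hw hT ha hb
  · exact h.swap.lt_setWeight_of_mem_of_notMem hG hw.swap hT hb ha
  · exact h.lt_setWeight_of_notMem_of_notMem hG hw hT ha hb

theorem not_inGcs (hG : G.Preconnected) (h : TwinConfig G a b x y z) : ¬ InGcs G := by
  intro hGcs
  obtain ⟨w, hw⟩ := h.exists_isTwinWeight
  exact safeNumber_ne_connSafeNumber hw.pos (h.isSafeSet hw)
    (fun _ hT => h.setWeight_lt hG hw hT) (hGcs w hw.pos)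

end TwinConfig

lemma exists_adj_outside_of_neighborSet_eq_pair {G : SimpleGraph V} (hG : G.Preconnected)
    (hcard : 5 ≤ Fintype.card V) {a b x y : V} (hNa : G.neighborSet a = {x, y})
    (hNb : G.neighborSet b = {x, y}) :
    (∃ z, G.Adj x z ∧ z ≠ a ∧ z ≠ b) ∨ ∃ z, G.Adj y z ∧ z ≠ a ∧ z ≠ b := by
  by_contra! hnone
  obtain ⟨hx, hy⟩ := hnone
  have hclosed : ∀ p ∈ ({a, b, x, y} : Finset V), ∀ q, G.Adj p q →
      q ∈ ({a, b, x, y} : Finset V) := by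
    intro p hp q hpq
    rw [← mem_neighborSet] at hpq
    simp only [Finset.mem_insert, Finset.mem_singleton] at hp ⊢
    rcases hp with rfl | rfl | rfl | rfl
    · rw [hNa] at hpq; tauto
    · rw [hNb] at hpq; tauto
    · by_cases hqa : q = a
      exacts [Or.inl hqa, Or.inr (Or.inl (hx q hpq hqa))]
    · by_cases hqa : q = a
      exacts [Or.inl hqa, Or.inr (Or.inl (hy q hpq hqa))]
  have hcard4 := (hG.card_le_of_adj_closed (Finset.mem_insert_self a _) hclosed).trans
    Finset.card_le_four
  omega

theorem stmt_18 (G : SimpleGraph V) (hG : G.Connected) (hbip : G.Colorable 2)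
    (hGcs : InGcs G) (hcard : 5 ≤ Fintype.card V) :
    ∀ a b : V, a ≠ b → G.degree a = 2 → G.degree b = 2 →
      G.neighborSet a ≠ G.neighborSet b := by
  intro a b hab hda _ hN
  obtain ⟨x, y, hxy, hNa⟩ := exists_neighborSet_eq_pair hda
  have hNb : G.neighborSet b = {x, y} := hN ▸ hNa
  have hnxy : ¬ G.Adj x y := hbip.not_adj_of_adj_of_adj
    (adj_left_of_neighborSet_eq_pair hNa) (adj_right_of_neighborSet_eq_pair hNa)
  rcases exists_adj_outside_of_neighborSet_eq_pair hG.preconnected hcard hNa hNb with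
    ⟨z, hxz, hza, hzb⟩ | ⟨z, hyz, hza, hzb⟩
  · exact TwinConfig.not_inGcs hG.preconnected ⟨hab, hxy, hNa, hNb, hnxy, hxz, hza, hzb⟩ hGcs
  · rw [Set.pair_comm] at hNa hNb
    exact TwinConfig.not_inGcs hG.preconnected
      ⟨hab, hxy.symm, hNa, hNb, fun h => hnxy h.symm, hyz, hza, hzb⟩ hGcs
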